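/- arXiv:math/9905194 — 2 statements merged into one kernel-verified Lean document; each statement's English description precedes it below -/
import Mathlib

section
/- Let n be a natural number with n ≤ 8. If S ⊆ ℤ² satisfies N_S(x) ≤ n for every x ∈ S, then the upper density of S is at most 8/(16 − n). -/
open Filter

/-- `y` is a neighbor of `x` in the 8-point (Moore) neighborhood of `ℤ²`. -/
def IsNbr (x y : ℤ × ℤ) : Prop :=
  y ≠ x ∧ |y.1 - x.1| ≤ 1 ∧ |y.2 - x.2| ≤ 1

/-- `N_S(x)`: the number of neighbors of `x` lying in `S`. -/
noncomputable def nbrCount (S : Set (ℤ × ℤ)) (x : ℤ × ℤ) : ℕ :=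
  Set.ncard {y ∈ S | IsNbr x y}

/-- The box `B_r = {x : |x₁| < r, |x₂| < r}`. -/
def box (r : ℕ) : Set (ℤ × ℤ) :=
  {x | |x.1| < (r : ℤ) ∧ |x.2| < (r : ℤ)}

/-- The upper density of `S ⊆ ℤ²`: `limsup_{r → ∞} |S ∩ B_r| / (2r-1)²`. -/
noncomputable def upperDensity (S : Set (ℤ × ℤ)) : ℝ :=
  limsup (fun r : ℕ => (Set.ncard (S ∩ box r) : ℝ) / (2 * (r : ℝ) - 1) ^ 2) atTop

/-!
Double count the neighboring pairs `(x, y)` with `x ∈ A := S ∩ B_r` and `y ∉ S`. Such a `y` lies in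
`B_{r+1}`, so it belongs to `T := B_{r+1} \ S`. Each `x ∈ A` has at least `8 - n` neighbors in `T`,
and each `y ∈ T` has at most `8` neighbors in `A`, so `(8 - n)|A| ≤ 8|T|`. Since `A` and `T` are
disjoint subsets of `B_{r+1}`, `(16 - n)|A| ≤ 8(|A| + |T|) ≤ 8(2r + 1)²`, and
`(2r + 1)² / (2r - 1)² → 1`.
-/

open Finset hiding box

open scoped Classical

lemma IsNbr.symm {x y : ℤ × ℤ} (h : IsNbr x y) : IsNbr y x := by
  obtain ⟨hne, h₁, h₂⟩ := h
  exact ⟨hne.symm, abs_sub_comm y.1 x.1 ▸ h₁, abs_sub_comm y.2 x.2 ▸ h₂⟩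

lemma IsNbr.mem_box_succ {r : ℕ} {x y : ℤ × ℤ} (hx : x ∈ box r) (h : IsNbr x y) :
    y ∈ box (r + 1) := by
  obtain ⟨-, h₁, h₂⟩ := h
  simp only [box, Set.mem_ofPred_eq, abs_lt, abs_le] at hx h₁ h₂ ⊢
  push_cast
  omega

lemma box_subset_box_succ (r : ℕ) : box r ⊆ box (r + 1) := by
  intro x hx
  simp only [box, Set.mem_ofPred_eq] at hx ⊢
  push_cast
  omega

noncomputable def nbrFinset (x : ℤ × ℤ) : Finset (ℤ × ℤ) :=
  (Icc (x.1 - 1) (x.1 + 1) ×ˢ Icc (x.2 - 1) (x.2 + 1)).erase x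

lemma mem_nbrFinset {x y : ℤ × ℤ} : y ∈ nbrFinset x ↔ IsNbr x y := by
  simp only [nbrFinset, mem_erase, mem_product, mem_Icc, IsNbr, abs_le]
  exact and_congr_right fun _ => by omega

lemma card_nbrFinset (x : ℤ × ℤ) : #(nbrFinset x) = 8 := by
  rw [nbrFinset, card_erase_of_mem (by simp), card_product, Int.card_Icc, Int.card_Icc]
  ring_nf
  rfl

lemma nbrCount_eq_card_filter (S : Set (ℤ × ℤ)) (x : ℤ × ℤ) :
    nbrCount S x = #{y ∈ nbrFinset x | y ∈ S} := by
  rw [nbrCount, ← Set.ncard_coe_finset]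
  congr 1
  ext y
  simp [mem_nbrFinset, and_comm]

lemma sub_le_card_nbrFinset_filter_notMem {S : Set (ℤ × ℤ)} {x : ℤ × ℤ} {n : ℕ}
    (h : nbrCount S x ≤ n) : 8 - n ≤ #{y ∈ nbrFinset x | y ∉ S} := by
  have := card_filter_add_card_filter_not (s := nbrFinset x) (· ∈ S)
  rw [card_nbrFinset, ← nbrCount_eq_card_filter] at this
  omega

noncomputable def boxFinset (r : ℕ) : Finset (ℤ × ℤ) :=
  Icc (1 - (r : ℤ)) (r - 1) ×ˢ Icc (1 - (r : ℤ)) (r - 1)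

lemma mem_boxFinset {r : ℕ} {x : ℤ × ℤ} : x ∈ boxFinset r ↔ x ∈ box r := by
  simp only [boxFinset, mem_product, mem_Icc, box, Set.mem_ofPred_eq, abs_lt]
  omega

lemma card_boxFinset_succ (r : ℕ) : #(boxFinset (r + 1)) = (2 * r + 1) ^ 2 := by
  rw [boxFinset, card_product, Int.card_Icc, sq]
  congr <;> omega

lemma ncard_inter_box (S : Set (ℤ × ℤ)) (r : ℕ) :
    (S ∩ box r).ncard = #{x ∈ boxFinset r | x ∈ S} := by
  rw [← Set.ncard_coe_finset]
  congr 1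
  ext x
  simp [mem_boxFinset, and_comm]

lemma ncard_inter_box_le {S : Set (ℤ × ℤ)} {n : ℕ} (h : ∀ x ∈ S, nbrCount S x ≤ n) (r : ℕ) :
    (16 - n) * (S ∩ box r).ncard ≤ 8 * (2 * r + 1) ^ 2 := by
  set A := {x ∈ boxFinset r | x ∈ S}
  set T := {y ∈ boxFinset (r + 1) | y ∉ S}
  have hdouble : #A * (8 - n) ≤ #T * 8 := by
    refine card_mul_le_card_mul IsNbr (fun x hx => ?_) (fun y _ => ?_)
    · rw [mem_filter, mem_boxFinset] at hx
      refine (sub_le_card_nbrFinset_filter_notMem (h x hx.2)).trans (card_le_card ?_)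
      intro y hy
      rw [mem_filter, mem_nbrFinset] at hy
      simp only [bipartiteAbove, T, mem_filter, mem_boxFinset]
      exact ⟨⟨hy.1.mem_box_succ hx.1, hy.2⟩, hy.1⟩
    · refine (card_le_card fun x hx => ?_).trans_eq (card_nbrFinset y)
      exact mem_nbrFinset.2 (mem_filter.1 hx).2.symm
  have hcover : #A + #T ≤ (2 * r + 1) ^ 2 := by
    rw [← card_boxFinset_succ, ← card_union_of_disjoint (disjoint_filter_filter_not _ _ _)]
    refine card_le_card (union_subset (fun x hx => ?_) (filter_subset _ _))
    rw [mem_filter, mem_boxFinset] at hx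
    exact mem_boxFinset.2 (box_subset_box_succ r hx.1)
  rw [ncard_inter_box]
  calc (16 - n) * #A ≤ (8 - n) * #A + 8 * #A := by rw [← add_mul]; gcongr; omega
    _ ≤ 8 * (#A + #T) := by linarith
    _ ≤ 8 * (2 * r + 1) ^ 2 := by gcongr

lemma upperDensity_le_of_ncard_inter_box_le {S : Set (ℤ × ℤ)} {c : ℝ}
    (h : ∀ r : ℕ, ((S ∩ box r).ncard : ℝ) ≤ c * (2 * r + 1) ^ 2) : upperDensity S ≤ c := by
  set v := fun r : ℕ => c * ((1 + 2 * r) / (-1 + 2 * r)) ^ 2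
  have hv : Tendsto v atTop (nhds c) := by
    have := tendsto_add_mul_div_add_mul_atTop_nhds (1 : ℝ) (-1) 2 two_ne_zero
    simpa using (this.pow 2).const_mul c
  have hle : ∀ᶠ r in atTop, ((S ∩ box r).ncard : ℝ) / (2 * r - 1) ^ 2 ≤ v r := by
    filter_upwards [eventually_ge_atTop 1] with r hr
    have hpos : (0 : ℝ) < -1 + 2 * r := by
      have : (1 : ℝ) ≤ r := by exact_mod_cast hr
      linarith
    rw [div_le_iff₀ (pow_pos (by linarith) 2)]
    refine (h r).trans_eq ?_
    simp only [v]
    field_simp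
    ring
  refine (limsup_le_limsup hle ?_ hv.isBoundedUnder_le).trans_eq hv.limsup_eq
  exact isCoboundedUnder_le_of_le atTop fun r => by positivity

theorem upperDensity_le_of_maxDeg (n : ℕ) (hn : n ≤ 8) (S : Set (ℤ × ℤ))
    (h : ∀ x ∈ S, nbrCount S x ≤ n) :
    upperDensity S ≤ 8 / (16 - (n : ℝ)) := by
  have hpos : (0 : ℝ) < 16 - n := by
    have : (n : ℝ) ≤ 8 := mod_cast hn
    linarith
  refine upperDensity_le_of_ncard_inter_box_le fun r => ?_
  rw [div_mul_eq_mul_div, le_div_iff₀ hpos, mul_comm]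
  have := ncard_inter_box_le h r
  rw [← Nat.cast_le (α := ℝ), Nat.cast_mul, Nat.cast_sub (by omega)] at this
  exact_mod_cast this
end

section
/- Let n be a natural number with n ≤ 3. If S ⊆ ℤ² satisfies N_S(x) ≤ n for every x ∈ S, then the upper density of S is at most 1/(4 − n). In particular, for n = 0, 1, 2 the maximal density of a set of maximum degree at most n is exactly 1/(4 − n), these values being attained respectively by {x : 2 ∣ x₁ and 2 ∣ x₂}, by {x : x₁ ≡ ±1 (mod 3) and 2 ∣ x₂}, and by {x : 2 ∣ x₁}. -/
open Filter Topology

/-- `S` has density `d`: the sequence `|S ∩ B_r| / (2r-1)²` tends to `d`. -/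
def HasDensity (S : Set (ℤ × ℤ)) (d : ℝ) : Prop :=
  Tendsto (fun r : ℕ => (Set.ncard (S ∩ box r) : ℝ) / (2 * (r : ℝ) - 1) ^ 2) atTop (𝓝 d)

/-!
Cut the plane into the unit cells `{c, c + e₁, c + e₂, c + e₁ + e₂}`. A point of `B_r` is a corner
of four cells, all among the `4r²` cells with lower corner in `[-r, r - 1]²`. Two distinct points
share a cell only if they are neighbors, and then they share at most two cells. A cell holding `k`
points of `S` satisfies `2k ≤ 2 + k(k - 1)`; summing over the cells gives
`8 |S ∩ B_r| ≤ 8r² + 2n |S ∩ B_r|`, i.e. `|S ∩ B_r| ≤ 4r² / (4 - n)`.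
The extremal sets are products of periodic subsets of `ℤ`, whose one-dimensional densities multiply.
-/

open Finset hiding box

lemma isNbr_iff {x y : ℤ × ℤ} :
    IsNbr x y ↔ (y.1 ≠ x.1 ∨ y.2 ≠ x.2) ∧
      x.1 - 1 ≤ y.1 ∧ y.1 ≤ x.1 + 1 ∧ x.2 - 1 ≤ y.2 ∧ y.2 ≤ x.2 + 1 := by
  simp only [IsNbr, Ne, Prod.ext_iff, abs_le]
  omega

instance : DecidableRel IsNbr := fun x y => by unfold IsNbr; infer_instance

noncomputable def cell (c : ℤ × ℤ) : Finset (ℤ × ℤ) := Icc c.1 (c.1 + 1) ×ˢ Icc c.2 (c.2 + 1)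

lemma mem_cell {x c : ℤ × ℤ} :
    x ∈ cell c ↔ c.1 ≤ x.1 ∧ x.1 ≤ c.1 + 1 ∧ c.2 ≤ x.2 ∧ x.2 ≤ c.2 + 1 := by
  simp only [cell, mem_product, mem_Icc, and_assoc]

lemma isNbr_of_mem_cell {x y c : ℤ × ℤ} (hx : x ∈ cell c) (hy : y ∈ cell c) (hne : y ≠ x) :
    IsNbr x y := by
  rw [mem_cell] at hx hy
  rw [Ne, Prod.ext_iff] at hne
  exact isNbr_iff.2 (by omega)

lemma card_filter_mem_cell_le_two {x y : ℤ × ℤ} (hxy : x ≠ y) (C : Finset (ℤ × ℤ)) :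
    #{c ∈ C | x ∈ cell c ∧ y ∈ cell c} ≤ 2 := by
  rw [Ne, Prod.ext_iff] at hxy
  obtain ⟨a, b, hab⟩ : ∃ a b : ℤ × ℤ, ∀ c, x ∈ cell c → y ∈ cell c → c = a ∨ c = b := by
    by_cases h : x.1 = y.1
    · refine ⟨(x.1 - 1, min x.2 y.2), (x.1, min x.2 y.2), fun c hx hy => ?_⟩
      rw [mem_cell] at hx hy
      simp only [Prod.ext_iff]
      omega
    · refine ⟨(min x.1 y.1, x.2 - 1), (min x.1 y.1, x.2), fun c hx hy => ?_⟩
      rw [mem_cell] at hx hy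
      simp only [Prod.ext_iff]
      omega
  calc #{c ∈ C | x ∈ cell c ∧ y ∈ cell c} ≤ #{a, b} := by
        refine card_le_card fun c hc => ?_
        rw [mem_filter] at hc
        simpa using hab c hc.2.1 hc.2.2
    _ ≤ 2 := card_le_two

lemma card_filter_mem_cell_eq_four {x : ℤ × ℤ} {C : Finset (ℤ × ℤ)}
    (hC : ∀ c, x ∈ cell c → c ∈ C) :
    #{c ∈ C | x ∈ cell c} = 4 := by
  have : {c ∈ C | x ∈ cell c} = Icc (x.1 - 1) x.1 ×ˢ Icc (x.2 - 1) x.2 := by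
    ext c
    have := hC c
    simp only [mem_filter, mem_cell, mem_product, mem_Icc] at this ⊢
    constructor
    · omega
    · intro h; exact ⟨this (by omega), by omega⟩
  simp [this]

lemma card_filter_mem_cell_le_ite {x y : ℤ × ℤ} (hxy : x ≠ y) (C : Finset (ℤ × ℤ)) :
    #{c ∈ C | x ∈ cell c ∧ y ∈ cell c} ≤ if IsNbr x y then 2 else 0 := by
  split_ifs with h
  · exact card_filter_mem_cell_le_two hxy C
  · simp only [nonpos_iff_eq_zero, card_eq_zero, filter_eq_empty_iff, not_and]
    exact fun c _ hx hy => h (isNbr_of_mem_cell hx hy hxy.symm)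

section

variable {T C : Finset (ℤ × ℤ)}

lemma sum_card_filter_mem_cell (hC : ∀ x ∈ T, ∀ c, x ∈ cell c → c ∈ C) :
    ∑ c ∈ C, #{x ∈ T | x ∈ cell c} = 4 * #T :=
  calc ∑ c ∈ C, #{x ∈ T | x ∈ cell c} = ∑ x ∈ T, #{c ∈ C | x ∈ cell c} :=
        sum_card_bipartiteAbove_eq_sum_card_bipartiteBelow (r := fun c x => x ∈ cell c)
    _ = ∑ x ∈ T, 4 := sum_congr rfl fun x hx => card_filter_mem_cell_eq_four (hC x hx)
    _ = 4 * #T := by rw [sum_const, smul_eq_mul, mul_comm]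

lemma sum_card_offDiag_filter_mem_cell_le :
    ∑ c ∈ C, #{x ∈ T | x ∈ cell c}.offDiag ≤ 2 * ∑ x ∈ T, #{y ∈ T | IsNbr x y} :=
  calc ∑ c ∈ C, #{x ∈ T | x ∈ cell c}.offDiag
      = ∑ c ∈ C, #{p ∈ T.offDiag | p.1 ∈ cell c ∧ p.2 ∈ cell c} := by
        refine sum_congr rfl fun c _ => congrArg card ?_
        ext p
        simp only [mem_offDiag, mem_filter]
        tauto
    _ = ∑ p ∈ T.offDiag, #{c ∈ C | p.1 ∈ cell c ∧ p.2 ∈ cell c} :=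
        sum_card_bipartiteAbove_eq_sum_card_bipartiteBelow
          (r := fun c (p : (ℤ × ℤ) × (ℤ × ℤ)) => p.1 ∈ cell c ∧ p.2 ∈ cell c)
    _ ≤ ∑ p ∈ T.offDiag, if IsNbr p.1 p.2 then 2 else 0 :=
        sum_le_sum fun p hp => card_filter_mem_cell_le_ite (mem_offDiag.1 hp).2.2 C
    _ ≤ ∑ p ∈ T ×ˢ T, if IsNbr p.1 p.2 then 2 else 0 :=
        sum_le_sum_of_subset fun p hp =>
          mem_product.2 ⟨(mem_offDiag.1 hp).1, (mem_offDiag.1 hp).2.1⟩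
    _ = 2 * ∑ x ∈ T, #{y ∈ T | IsNbr x y} := by
        simp only [sum_product, card_filter, mul_sum, mul_ite, mul_one, mul_zero]

lemma two_mul_le_two_add_mul_self_sub (k : ℕ) : 2 * k ≤ 2 + (k * k - k) := by
  rcases k with _ | _ | k
  · simp
  · simp
  · ring_nf
    omega

lemma four_mul_card_le_card_add_sum_card_filter_isNbr
    (hC : ∀ x ∈ T, ∀ c, x ∈ cell c → c ∈ C) :
    4 * #T ≤ #C + ∑ x ∈ T, #{y ∈ T | IsNbr x y} := by
  suffices 2 * (4 * #T) ≤ 2 * #C + 2 * ∑ x ∈ T, #{y ∈ T | IsNbr x y} by omega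
  calc 2 * (4 * #T) = ∑ c ∈ C, 2 * #{x ∈ T | x ∈ cell c} := by
        rw [← mul_sum, sum_card_filter_mem_cell hC]
    _ ≤ ∑ c ∈ C, (2 + #{x ∈ T | x ∈ cell c}.offDiag) := by
        gcongr with c
        rw [offDiag_card]
        exact two_mul_le_two_add_mul_self_sub _
    _ ≤ 2 * #C + 2 * ∑ x ∈ T, #{y ∈ T | IsNbr x y} := by
        rw [sum_add_distrib, sum_const, smul_eq_mul, mul_comm]
        gcongr
        exact sum_card_offDiag_filter_mem_cell_le

end

lemma finite_setOf_isNbr (x : ℤ × ℤ) : {y | IsNbr x y}.Finite :=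
  ((Set.finite_Icc (x.1 - 1) (x.1 + 1)).prod (Set.finite_Icc (x.2 - 1) (x.2 + 1))).subset
    fun y hy => by
      have := isNbr_iff.1 hy
      simp only [Set.mem_prod, Set.mem_Icc]
      omega

lemma card_filter_isNbr_le_nbrCount {S : Set (ℤ × ℤ)} {T : Finset (ℤ × ℤ)} (hT : ↑T ⊆ S)
    (x : ℤ × ℤ) : #{y ∈ T | IsNbr x y} ≤ nbrCount S x := by
  rw [nbrCount, ← Set.ncard_coe_finset]
  refine Set.ncard_le_ncard (fun y hy => ?_) ((finite_setOf_isNbr x).subset fun y hy => hy.2)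
  rw [coe_filter] at hy
  exact ⟨hT hy.1, hy.2⟩

lemma box_eq_prod (r : ℕ) : box r = Set.Ioo (-(r : ℤ)) r ×ˢ Set.Ioo (-(r : ℤ)) r := by
  ext x
  simp only [box, abs_lt, Set.mem_ofPred_eq, Set.mem_prod, Set.mem_Ioo]

lemma four_mul_ncard_inter_box_le {S : Set (ℤ × ℤ)} {n : ℕ} (hS : ∀ x ∈ S, nbrCount S x ≤ n)
    (r : ℕ) : 4 * (S ∩ box r).ncard ≤ 4 * r ^ 2 + n * (S ∩ box r).ncard := by
  classical
  set T : Finset (ℤ × ℤ) := {x ∈ Ioo (-(r : ℤ)) r ×ˢ Ioo (-(r : ℤ)) r | x ∈ S}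
  set C : Finset (ℤ × ℤ) := Icc (-(r : ℤ)) (r - 1) ×ˢ Icc (-(r : ℤ)) (r - 1)
  have hT : (T : Set (ℤ × ℤ)) = S ∩ box r := by
    ext x
    simp only [T, coe_filter, mem_product, mem_Ioo, box_eq_prod, Set.mem_inter_iff,
      Set.mem_prod, Set.mem_Ioo, Set.mem_ofPred_eq]
    tauto
  have hC : ∀ x ∈ T, ∀ c, x ∈ cell c → c ∈ C := by
    intro x hx c hc
    simp only [T, C, mem_filter, mem_product, mem_Ioo, mem_Icc, mem_cell] at hx hc ⊢
    omega
  have hdeg : ∑ x ∈ T, #{y ∈ T | IsNbr x y} ≤ n * #T :=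
    calc ∑ x ∈ T, #{y ∈ T | IsNbr x y} ≤ ∑ x ∈ T, n := sum_le_sum fun x hx =>
          (card_filter_isNbr_le_nbrCount (hT ▸ Set.inter_subset_left) x).trans
            (hS x (mem_filter.1 hx).2)
      _ = n * #T := by rw [sum_const, smul_eq_mul, mul_comm]
  have hCcard : #C = 4 * r ^ 2 := by
    simp only [C, card_product, Int.card_Icc]
    rw [show ((r : ℤ) - 1 + 1 - -r).toNat = 2 * r by omega]
    ring
  rw [← hT, Set.ncard_coe_finset]
  have := four_mul_card_le_card_add_sum_card_filter_isNbr hC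
  omega

lemma tendsto_two_mul_sub_one_atTop : Tendsto (fun r : ℕ => 2 * (r : ℝ) - 1) atTop atTop :=
  tendsto_atTop_add_const_right _ _ (tendsto_natCast_atTop_atTop.const_mul_atTop two_pos)

lemma tendsto_div_two_mul_sub_one_of_abs_sub_le {f : ℕ → ℝ} {α K : ℝ}
    (h : ∀ᶠ r in atTop, |f r - α * (2 * r - 1)| ≤ K) :
    Tendsto (fun r : ℕ => f r / (2 * r - 1)) atTop (𝓝 α) := by
  rw [tendsto_iff_norm_sub_tendsto_zero]
  refine squeeze_zero' (Eventually.of_forall fun _ => norm_nonneg _) ?_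
    (tendsto_two_mul_sub_one_atTop.const_div_atTop K)
  filter_upwards [h, eventually_ge_atTop 1] with r hr hr1
  have hpos : (0 : ℝ) < 2 * r - 1 := by
    have : (1 : ℝ) ≤ r := by exact_mod_cast hr1
    linarith
  rw [Real.norm_eq_abs, show f r / (2 * r - 1) - α = (f r - α * (2 * r - 1)) / (2 * r - 1) by
    field_simp, abs_div, abs_of_pos hpos]
  exact div_le_div_of_nonneg_right hr hpos.le

lemma tendsto_sq_div_two_mul_sub_one_sq :
    Tendsto (fun r : ℕ => (r : ℝ) ^ 2 / (2 * r - 1) ^ 2) atTop (𝓝 (1 / 4)) := by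
  have h : Tendsto (fun r : ℕ => (r : ℝ) / (2 * r - 1)) atTop (𝓝 (1 / 2)) :=
    tendsto_div_two_mul_sub_one_of_abs_sub_le (K := 1 / 2) <| Eventually.of_forall fun r => by
      rw [abs_le]; constructor <;> linarith
  convert h.pow 2 using 1
  · simp only [div_pow]
  · norm_num

lemma upperDensity_le_of_ncard_le {S : Set (ℤ × ℤ)} {a : ℝ}
    (h : ∀ r : ℕ, ((S ∩ box r).ncard : ℝ) ≤ a * r ^ 2) : upperDensity S ≤ a / 4 := by
  have hlim : Tendsto (fun r : ℕ => a * r ^ 2 / (2 * r - 1) ^ 2) atTop (𝓝 (a / 4)) := by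
    convert tendsto_sq_div_two_mul_sub_one_sq.const_mul a using 1
    · simp only [mul_div_assoc]
    · rw [mul_one_div]
  calc upperDensity S ≤ limsup (fun r : ℕ => a * r ^ 2 / (2 * r - 1) ^ 2) atTop :=
        limsup_le_limsup
          (Eventually.of_forall fun r => div_le_div_of_nonneg_right (h r) (by positivity))
          (isCoboundedUnder_le_of_eventually_le atTop (x := 0)
            (Eventually.of_forall fun r => by positivity))
          hlim.isBoundedUnder_le
    _ = a / 4 := hlim.limsup_eq

lemma upperDensity_le_of_nbrCount_le {n : ℕ} (hn : n < 4) {S : Set (ℤ × ℤ)}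
    (hS : ∀ x ∈ S, nbrCount S x ≤ n) : upperDensity S ≤ 1 / (4 - n) := by
  have h4n : (0 : ℝ) < 4 - n := by
    have : (n : ℝ) < 4 := by exact_mod_cast hn
    linarith
  calc upperDensity S ≤ 4 / (4 - n) / 4 := upperDensity_le_of_ncard_le fun r => by
        have : 4 * ((S ∩ box r).ncard : ℝ) ≤ 4 * r ^ 2 + n * (S ∩ box r).ncard := by
          exact_mod_cast four_mul_ncard_inter_box_le hS r
        rw [div_mul_eq_mul_div, le_div_iff₀ h4n]
        linarith
    _ = 1 / (4 - n) := by field_simp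

def HasIntDensity (A : Set ℤ) (α : ℝ) : Prop :=
  Tendsto (fun r : ℕ => ((A ∩ Set.Ioo (-(r : ℤ)) r).ncard : ℝ) / (2 * r - 1)) atTop (𝓝 α)

lemma HasIntDensity.prod {A B : Set ℤ} {α β : ℝ} (hA : HasIntDensity A α)
    (hB : HasIntDensity B β) : HasDensity (A ×ˢ B) (α * β) := by
  refine (hA.mul hB).congr fun r => ?_
  rw [box_eq_prod, Set.prod_inter_prod, Set.ncard_prod, Nat.cast_mul, div_mul_div_comm, sq]

lemma ncard_Ioo_neg_self (r : ℕ) : (Set.Ioo (-(r : ℤ)) r).ncard = 2 * r - 1 := by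
  rw [← coe_Ioo, Set.ncard_coe_finset, Int.card_Ioo]
  omega

lemma HasIntDensity.compl {A : Set ℤ} {α : ℝ} (h : HasIntDensity A α) :
    HasIntDensity Aᶜ (1 - α) := by
  refine ((tendsto_const_nhds (x := (1 : ℝ))).sub h).congr' ?_
  filter_upwards [eventually_ge_atTop 1] with r hr
  have hsplit := Set.ncard_inter_add_ncard_sdiff_eq_ncard (Set.Ioo (-(r : ℤ)) r) A
  rw [ncard_Ioo_neg_self, Set.sdiff_eq_compl_inter, Set.inter_comm (Set.Ioo _ _) A] at hsplit
  have hpos : (0 : ℝ) < 2 * r - 1 := by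
    have : (1 : ℝ) ≤ r := by exact_mod_cast hr
    linarith
  have : ((A ∩ Set.Ioo (-(r : ℤ)) r).ncard : ℝ) + (Aᶜ ∩ Set.Ioo (-(r : ℤ)) r).ncard =
      2 * r - 1 := by
    rw [← Nat.cast_add, hsplit]
    push_cast [Nat.cast_sub (by omega : 1 ≤ 2 * r)]
    ring
  field_simp
  linarith

lemma abs_card_filter_dvd_sub_le {p : ℤ} (hp : 0 < p) {r : ℕ} (hr : 1 ≤ r) :
    |(#{a ∈ Ioo (-(r : ℤ)) r | p ∣ a} : ℚ) - 1 / p * (2 * r - 1)| ≤ 1 := by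
  have hIoo : Ioo (-(r : ℤ)) r = Ioc (-(r : ℤ)) (r - 1) := by
    ext a
    simp only [mem_Ioo, mem_Ioc]
    omega
  set u : ℚ := ((r - 1 : ℤ) : ℚ) / p
  set v : ℚ := ((-r : ℤ) : ℚ) / p
  have hcard : (#{a ∈ Ioc (-(r : ℤ)) (r - 1) | p ∣ a} : ℤ) = ⌊u⌋ - ⌊v⌋ := by
    refine (Int.Ioc_filter_dvd_card _ _ hp).trans (max_eq_left (sub_nonneg.2 (Int.floor_mono ?_)))
    gcongr
    omega
  have huv : u - v = 1 / p * (2 * r - 1) := by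
    simp only [u, v]
    push_cast
    ring
  rw [hIoo, ← Int.cast_natCast, hcard, Int.cast_sub, abs_le]
  constructor <;> linarith [Int.floor_le u, Int.lt_floor_add_one u, Int.floor_le v,
    Int.lt_floor_add_one v]

lemma hasIntDensity_dvd {p : ℤ} (hp : 0 < p) : HasIntDensity {a | p ∣ a} (1 / p) := by
  refine tendsto_div_two_mul_sub_one_of_abs_sub_le (K := 1) ?_
  filter_upwards [eventually_ge_atTop 1] with r hr
  have hset : {a | p ∣ a} ∩ Set.Ioo (-(r : ℤ)) r = ↑({a ∈ Ioo (-(r : ℤ)) r | p ∣ a}) := by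
    ext a
    simp only [Set.mem_inter_iff, Set.mem_ofPred_eq, Set.mem_Ioo, coe_filter, mem_Ioo]
    tauto
  rw [hset, Set.ncard_coe_finset]
  exact_mod_cast abs_card_filter_dvd_sub_le hp hr

lemma nbrCount_le_card {S : Set (ℤ × ℤ)} {x : ℤ × ℤ} (F : Finset (ℤ × ℤ))
    (h : ∀ y ∈ S, IsNbr x y → y ∈ F) : nbrCount S x ≤ #F := by
  rw [nbrCount, ← Set.ncard_coe_finset]
  exact Set.ncard_le_ncard (fun y hy => h y hy.1 hy.2) F.finite_toSet

theorem voronoi_bound_small_degrees :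
    (∀ n : ℕ, n ≤ 3 → ∀ S : Set (ℤ × ℤ),
      (∀ x ∈ S, nbrCount S x ≤ n) → upperDensity S ≤ 1 / (4 - (n : ℝ))) ∧
    ((∀ x ∈ {x : ℤ × ℤ | 2 ∣ x.1 ∧ 2 ∣ x.2},
        nbrCount {x : ℤ × ℤ | 2 ∣ x.1 ∧ 2 ∣ x.2} x ≤ 0) ∧
      HasDensity {x : ℤ × ℤ | 2 ∣ x.1 ∧ 2 ∣ x.2} (1 / 4)) ∧
    ((∀ x ∈ {x : ℤ × ℤ | (x.1 ≡ 1 [ZMOD 3] ∨ x.1 ≡ -1 [ZMOD 3]) ∧ 2 ∣ x.2},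
        nbrCount {x : ℤ × ℤ | (x.1 ≡ 1 [ZMOD 3] ∨ x.1 ≡ -1 [ZMOD 3]) ∧ 2 ∣ x.2} x ≤ 1) ∧
      HasDensity {x : ℤ × ℤ | (x.1 ≡ 1 [ZMOD 3] ∨ x.1 ≡ -1 [ZMOD 3]) ∧ 2 ∣ x.2} (1 / 3)) ∧
    ((∀ x ∈ {x : ℤ × ℤ | 2 ∣ x.1},
        nbrCount {x : ℤ × ℤ | 2 ∣ x.1} x ≤ 2) ∧
      HasDensity {x : ℤ × ℤ | 2 ∣ x.1} (1 / 2)) := by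
  refine ⟨fun n hn S hS => upperDensity_le_of_nbrCount_le (by omega) hS,
    ⟨?_, ?_⟩, ⟨?_, ?_⟩, ⟨?_, ?_⟩⟩
  · refine fun x hx => nbrCount_le_card ∅ fun y hy hxy => ?_
    have := isNbr_iff.1 hxy
    simp only [Set.mem_ofPred_eq] at hx hy
    omega
  · convert (hasIntDensity_dvd two_pos).prod (hasIntDensity_dvd two_pos) using 1
    · rfl
    · norm_num
  · -- the neighbor of `x` is the other non-multiple of `3` in `{3q + 1, 3q + 2}`
    refine fun x hx => nbrCount_le_card {(6 * (x.1 / 3) + 3 - x.1, x.2)} fun y hy hxy => ?_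
    have := isNbr_iff.1 hxy
    simp only [Set.mem_ofPred_eq, Int.ModEq, mem_singleton, Prod.ext_iff] at hx hy ⊢
    omega
  · have h3 : {a : ℤ | a ≡ 1 [ZMOD 3] ∨ a ≡ -1 [ZMOD 3]} = {a | 3 ∣ a}ᶜ := by
      ext a
      simp only [Set.mem_ofPred_eq, Set.mem_compl_iff, Int.ModEq]
      omega
    convert (hasIntDensity_dvd three_pos).compl.prod (hasIntDensity_dvd two_pos) using 1
    · rw [← h3]; rfl
    · norm_num
  · refine fun x hx => (nbrCount_le_card {(x.1, x.2 - 1), (x.1, x.2 + 1)}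
      fun y hy hxy => ?_).trans card_le_two
    have := isNbr_iff.1 hxy
    simp only [Set.mem_ofPred_eq, mem_insert, mem_singleton, Prod.ext_iff] at hx hy ⊢
    omega
  · convert (hasIntDensity_dvd two_pos).prod (hasIntDensity_dvd one_pos) using 1
    · ext x
      simp
    · norm_num
end
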